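/- arXiv:0710.0403 — 4 statements merged into one kernel-verified Lean document; each statement's English description precedes it below -/
import Mathlib

section
/- For a linear map L with singular values 0 ≤ s₁ ≤ ... ≤ s_n and integers 1 ≤ j ≤ k ≤ l ≤ n, the expansion/contraction inequality holds: ‖Λ^j L‖^((l-k)/(l-j)) · ‖Λ^l L‖^((k-j)/(l-j)) ≤ ‖Λ^k L‖ (when j < l). Equivalently, (s_{n-j+1}⋯s_n)^(l-k) · (s_{n-l+1}⋯s_n)^(k-j) ≤ (s_{n-k+1}⋯s_n)^(l-j). -/
/-!
Split the top `l` values into blocks `A` (the `l - k` lowest), `B` (the next `k - j`) and `C`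
(the top `j`). By monotonicity the single value `s (n - k)` bounds every factor of `A` from above
and every factor of `B` from below, so `A ^ (k - j) ≤ B ^ (l - k)`. Multiplying by
`B ^ (k - j) * C ^ (l - j)` gives `C ^ (l - k) * (A B C) ^ (k - j) ≤ (B C) ^ (l - j)`, and taking
`(l - j)`-th roots yields the claim.
-/

open Finset

lemma prod_Ioc_pow_le_prod_Ioc_pow {f : ℕ → ℝ} {u v w : ℕ} (huv : u ≤ v) (hvw : v ≤ w)
    (hf0 : ∀ i ∈ Set.Ioc u w, 0 ≤ f i) (hf : MonotoneOn f (Set.Ioc u w)) :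
    (∏ i ∈ Ioc u v, f i) ^ (w - v) ≤ (∏ i ∈ Ioc v w, f i) ^ (v - u) := by
  rcases huv.eq_or_lt with rfl | huv
  · simp
  have hv : v ∈ Set.Ioc u w := ⟨huv, hvw⟩
  have hleft : ∀ i ∈ Ioc u v, i ∈ Set.Ioc u w := fun i hi =>
    Set.Ioc_subset_Ioc_right hvw (mem_Ioc.1 hi)
  have hprod_left_le : (∏ i ∈ Ioc u v, f i) ≤ f v ^ (v - u) := by
    rw [← Nat.card_Ioc u v, ← prod_const]
    exact prod_le_prod (fun i hi => hf0 i (hleft i hi))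
      fun i hi => hf (hleft i hi) hv (mem_Ioc.1 hi).2
  have hle_prod_right : f v ^ (w - v) ≤ ∏ i ∈ Ioc v w, f i := by
    rw [← Nat.card_Ioc v w, ← prod_const]
    exact prod_le_prod (fun _ _ => hf0 v hv) fun i hi =>
      hf hv (Set.Ioc_subset_Ioc_left huv.le (mem_Ioc.1 hi)) (mem_Ioc.1 hi).1.le
  calc (∏ i ∈ Ioc u v, f i) ^ (w - v)
      ≤ (f v ^ (v - u)) ^ (w - v) :=
        pow_le_pow_left₀ (prod_nonneg fun i hi => hf0 i (hleft i hi)) hprod_left_le _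
    _ = (f v ^ (w - v)) ^ (v - u) := by rw [← pow_mul, ← pow_mul, Nat.mul_comm]
    _ ≤ (∏ i ∈ Ioc v w, f i) ^ (v - u) :=
        pow_le_pow_left₀ (pow_nonneg (hf0 v hv) _) hle_prod_right _

lemma prod_Ioc_pow_mul_prod_Ioc_pow_le {f : ℕ → ℝ} {u v w n : ℕ} (huv : u ≤ v) (hvw : v ≤ w)
    (hwn : w ≤ n) (hf0 : ∀ i ∈ Set.Ioc u n, 0 ≤ f i) (hf : MonotoneOn f (Set.Ioc u n)) :
    (∏ i ∈ Ioc w n, f i) ^ (v - u) * (∏ i ∈ Ioc u n, f i) ^ (w - v) ≤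
      (∏ i ∈ Ioc v n, f i) ^ (v - u + (w - v)) := by
  have hsub : Set.Ioc u w ⊆ Set.Ioc u n := Set.Ioc_subset_Ioc_right hwn
  have key :=
    prod_Ioc_pow_le_prod_Ioc_pow huv hvw (fun i hi => hf0 i (hsub hi)) (hf.mono hsub)
  have hnonneg : ∀ a b, u ≤ a → b ≤ n → 0 ≤ ∏ i ∈ Ioc a b, f i := fun a b ha hb =>
    prod_nonneg fun i hi => hf0 i ⟨ha.trans_lt (mem_Ioc.1 hi).1, (mem_Ioc.1 hi).2.trans hb⟩
  have hB := hnonneg v w huv hwn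
  have hC := hnonneg w n (huv.trans hvw) le_rfl
  rw [← prod_Ioc_consecutive _ huv (hvw.trans hwn), ← prod_Ioc_consecutive _ hvw hwn]
  set A := ∏ i ∈ Ioc u v, f i
  set B := ∏ i ∈ Ioc v w, f i
  set C := ∏ i ∈ Ioc w n, f i
  calc C ^ (v - u) * (A * (B * C)) ^ (w - v)
      = A ^ (w - v) * B ^ (w - v) * C ^ (v - u + (w - v)) := by ring
    _ ≤ B ^ (v - u) * B ^ (w - v) * C ^ (v - u + (w - v)) := by gcongr
    _ = (B * C) ^ (v - u + (w - v)) := by ring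

lemma rpow_div_mul_rpow_div_le {x y z : ℝ} {p q : ℕ} (hx : 0 ≤ x) (hy : 0 ≤ y) (hz : 0 ≤ z)
    (hpq : p + q ≠ 0) (h : x ^ p * y ^ q ≤ z ^ (p + q)) :
    x ^ ((p : ℝ) / (p + q : ℕ)) * y ^ ((q : ℝ) / (p + q : ℕ)) ≤ z := by
  have hroot :=
    Real.rpow_le_rpow (by positivity) h (by positivity : (0 : ℝ) ≤ ((p + q : ℕ) : ℝ)⁻¹)
  rwa [Real.pow_rpow_inv_natCast hz hpq, Real.mul_rpow (by positivity) (by positivity),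
    ← Real.rpow_natCast, ← Real.rpow_natCast y, ← Real.rpow_mul hx, ← Real.rpow_mul hy,
    ← div_eq_mul_inv, ← div_eq_mul_inv] at hroot

theorem area_expanding_stmt1_general (n j k l : ℕ) (s : ℕ → ℝ)
    (hs0 : ∀ i, 1 ≤ i → i ≤ n → 0 ≤ s i)
    (hmono : ∀ i, 1 ≤ i → i < n → s i ≤ s (i + 1))
    (hjk : j ≤ k) (hkl : k ≤ l) (hln : l ≤ n) (hjl : j < l) :
    (∏ i ∈ Finset.Icc (n - j + 1) n, s i) ^ (((l : ℝ) - k) / ((l : ℝ) - j)) *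
      (∏ i ∈ Finset.Icc (n - l + 1) n, s i) ^ (((k : ℝ) - j) / ((l : ℝ) - j)) ≤
      ∏ i ∈ Finset.Icc (n - k + 1) n, s i := by
  have hs : MonotoneOn s (Set.Icc 1 n) := monotoneOn_of_le_add_one Set.ordConnected_Icc
    fun i _ hi hi' => hmono i hi.1 hi'.2
  have hsub : Set.Ioc (n - l) n ⊆ Set.Icc 1 n := fun i hi => ⟨Nat.one_le_of_lt hi.1, hi.2⟩
  have hprod : ∀ m, 0 ≤ ∏ i ∈ Ioc (n - m) n, s i := fun m =>
    prod_nonneg fun i hi => hs0 i (Nat.one_le_of_lt (mem_Ioc.1 hi).1) (mem_Ioc.1 hi).2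
  have key := prod_Ioc_pow_mul_prod_Ioc_pow_le (u := n - l) (v := n - k) (w := n - j)
    (by omega) (by omega) (Nat.sub_le n j) (fun i hi => hs0 i (hsub hi).1 hi.2) (hs.mono hsub)
  rw [show n - k - (n - l) = l - k by omega, show n - j - (n - k) = k - j by omega] at key
  have hroot := rpow_div_mul_rpow_div_le (hprod j) (hprod l) (hprod k) (by omega) key
  simp only [Icc_add_one_left_eq_Ioc]
  convert hroot using 3 <;> push_cast [Nat.cast_sub hkl, Nat.cast_sub hjk] <;> ring

/-- expansion/contraction inequality for the dilations of a linear
map with singular values `0 ≤ s₁ ≤ ... ≤ s_n`: for `1 ≤ j ≤ k ≤ l ≤ n`, `j < l`,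
`‖Λ^j L‖^((l-k)/(l-j)) · ‖Λ^l L‖^((k-j)/(l-j)) ≤ ‖Λ^k L‖`, where the
`m`-dilation `‖Λ^m L‖` is the product of the `m` largest singular values
`s_{n-m+1} ⋯ s_n`. -/
theorem area_expanding_stmt1 (n j k l : ℕ) (s : ℕ → ℝ)
    (hs0 : ∀ i, 1 ≤ i → i ≤ n → 0 ≤ s i)
    (hmono : ∀ i, 1 ≤ i → i < n → s i ≤ s (i + 1))
    (hj : 1 ≤ j) (hjk : j ≤ k) (hkl : k ≤ l) (hln : l ≤ n) (hjl : j < l) :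
    (∏ i ∈ Finset.Icc (n - j + 1) n, s i) ^ (((l : ℝ) - k) / ((l : ℝ) - j)) *
      (∏ i ∈ Finset.Icc (n - l + 1) n, s i) ^ (((k : ℝ) - j) / ((l : ℝ) - j)) ≤
      ∏ i ∈ Finset.Icc (n - k + 1) n, s i :=
  area_expanding_stmt1_general n j k l s hs0 hmono hjk hkl hln hjl
end

section
/- Let s₁ ≤ s₂ ≤ ... ≤ s_n be nonnegative real numbers and let 1 ≤ j ≤ k ≤ l ≤ n be integers with j < l. Then (∏_{i=n-j+1}^{n} s_i)^(l-k) · (∏_{i=n-l+1}^{n} s_i)^(k-j) ≤ (∏_{i=n-k+1}^{n} s_i)^(l-j). -/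
/-! Write `P m` for the product of the top `m` entries. Splitting `P l = A * P k` and
`P k = B * P j`, every factor of `A` is at most every factor of `B`, whence
`A ^ (k - j) ≤ B ^ (l - k)` by comparing the two sides factor by factor; multiplying by
`P j ^ (l - k) * P k ^ (k - j)` gives the claim. -/

open Finset

section

variable {R : Type*} [CommSemiring R] [PartialOrder R] [IsOrderedRing R]

theorem Finset.prod_pow_card_le_prod_pow_card {ι : Type*} (s t : Finset ι) (f : ι → R)
    (hf : ∀ i ∈ s, 0 ≤ f i) (hst : ∀ i ∈ s, ∀ j ∈ t, f i ≤ f j) :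
    (∏ i ∈ s, f i) ^ #t ≤ (∏ j ∈ t, f j) ^ #s :=
  calc (∏ i ∈ s, f i) ^ #t = ∏ i ∈ s, ∏ _j ∈ t, f i := by simp only [prod_const, prod_pow]
    _ ≤ ∏ i ∈ s, ∏ j ∈ t, f j :=
      prod_le_prod (fun i hi => prod_nonneg fun _ _ => hf i hi)
        fun i hi => prod_le_prod (fun _ _ => hf i hi) (hst i hi)
    _ = (∏ j ∈ t, f j) ^ #s := prod_const _

theorem Finset.prod_Ioc_pow_mul_prod_Ioc_pow_le {f : ℕ → R} {a b c d : ℕ}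
    (hab : a ≤ b) (hbc : b ≤ c) (hcd : c ≤ d)
    (hf : ∀ i ∈ Ioc a d, 0 ≤ f i) (hmono : MonotoneOn f (Set.Ioc a d)) :
    (∏ i ∈ Ioc c d, f i) ^ (b - a) * (∏ i ∈ Ioc a d, f i) ^ (c - b) ≤
      (∏ i ∈ Ioc b d, f i) ^ (c - a) := by
  rw [← prod_Ioc_consecutive f hab (hbc.trans hcd), ← prod_Ioc_consecutive f hbc hcd]
  set A := ∏ i ∈ Ioc a b, f i
  set B := ∏ i ∈ Ioc b c, f i
  set P := ∏ i ∈ Ioc c d, f i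
  have hB : 0 ≤ B := prod_nonneg fun i hi => hf i (by simp only [mem_Ioc] at hi ⊢; omega)
  have hP : 0 ≤ P := prod_nonneg fun i hi => hf i (by simp only [mem_Ioc] at hi ⊢; omega)
  have hAB : A ^ (c - b) ≤ B ^ (b - a) := by
    simpa only [Nat.card_Ioc] using prod_pow_card_le_prod_pow_card (Ioc a b) (Ioc b c) f
      (fun i hi => hf i (by simp only [mem_Ioc] at hi ⊢; omega))
      fun i hi j hj => by
        simp only [mem_Ioc] at hi hj
        exact hmono ⟨by omega, by omega⟩ ⟨by omega, by omega⟩ (by omega)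
  calc P ^ (b - a) * (A * (B * P)) ^ (c - b)
      = A ^ (c - b) * (P ^ (b - a) * (B * P) ^ (c - b)) := by ring
    _ ≤ B ^ (b - a) * (P ^ (b - a) * (B * P) ^ (c - b)) := by gcongr
    _ = (B * P) ^ (b - a + (c - b)) := by ring
    _ = (B * P) ^ (c - a) := by rw [show b - a + (c - b) = c - a by omega]

end

theorem area_expanding_stmt2_general (n j k l : ℕ) (s : ℕ → ℝ)
    (hs0 : ∀ i, 1 ≤ i → i ≤ n → 0 ≤ s i)
    (hmono : ∀ i, 1 ≤ i → i < n → s i ≤ s (i + 1))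
    (hjk : j ≤ k) (hkl : k ≤ l) (hln : l ≤ n) :
    (∏ i ∈ Finset.Icc (n - j + 1) n, s i) ^ (l - k) *
      (∏ i ∈ Finset.Icc (n - l + 1) n, s i) ^ (k - j) ≤
      (∏ i ∈ Finset.Icc (n - k + 1) n, s i) ^ (l - j) := by
  have hmon : MonotoneOn s (Set.Icc 1 n) :=
    monotoneOn_of_le_succ Set.ordConnected_Icc fun i _ hi hi' => by
      rw [Order.succ_eq_add_one] at hi' ⊢
      exact hmono i hi.1 (by simp only [Set.mem_Icc] at hi'; omega)
  have key := prod_Ioc_pow_mul_prod_Ioc_pow_le (f := s) (d := n) (Nat.sub_le_sub_left hkl n)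
    (Nat.sub_le_sub_left hjk n) (Nat.sub_le n j)
    (fun i hi => hs0 i (by simp only [mem_Ioc] at hi; omega) (mem_Ioc.mp hi).2)
    (hmon.mono fun i hi => ⟨by simp only [Set.mem_Ioc] at hi; omega, hi.2⟩)
  rwa [show n - k - (n - l) = l - k by omega, show n - j - (n - k) = k - j by omega,
    show n - j - (n - l) = l - j by omega, ← Icc_add_one_left_eq_Ioc, ← Icc_add_one_left_eq_Ioc,
    ← Icc_add_one_left_eq_Ioc] at key

/-- for nonnegative nondecreasing reals `s₁ ≤ ... ≤ s_n` and
`1 ≤ j ≤ k ≤ l ≤ n` with `j < l`: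
`(∏ top j)^(l-k) · (∏ top l)^(k-j) ≤ (∏ top k)^(l-j)`. -/
theorem area_expanding_stmt2 (n j k l : ℕ) (s : ℕ → ℝ)
    (hs0 : ∀ i, 1 ≤ i → i ≤ n → 0 ≤ s i)
    (hmono : ∀ i, 1 ≤ i → i < n → s i ≤ s (i + 1))
    (hj : 1 ≤ j) (hjk : j ≤ k) (hkl : k ≤ l) (hln : l ≤ n) (hjl : j < l) :
    (∏ i ∈ Finset.Icc (n - j + 1) n, s i) ^ (l - k) *
      (∏ i ∈ Finset.Icc (n - l + 1) n, s i) ^ (k - j) ≤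
      (∏ i ∈ Finset.Icc (n - k + 1) n, s i) ^ (l - j) :=
  area_expanding_stmt2_general n j k l s hs0 hmono hjk hkl hln
end

section
/- Let R₁ ≤ ... ≤ R_n and S₁ ≤ ... ≤ S_n be positive reals and 0 ≤ j < k-1 < k ≤ n. Suppose ((R₁⋯R_j)/(S₁⋯S_j))^(1/(k-j)) ≤ ((R₁⋯R_{j+1})/(S₁⋯S_{j+1}))^(1/(k-j-1)). Then S₁⋯S_j · S_{j+1}^(k-j) ≤ R₁⋯R_j · R_{j+1}^(k-j); consequently, if L is defined by R₁⋯R_j · L^(k-j) = S₁⋯S_j · S_j^(k-j), then L ≤ R_{j+1}. -/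
/-!
Write `m = k - j ≥ 2`. Raising the hypothesis to the power `m(m-1)` turns it into
`(R₁⋯R_j / S₁⋯S_j)^(m-1) ≤ (R₁⋯R_{j+1} / S₁⋯S_{j+1})^m`, and cancelling `(R₁⋯R_j / S₁⋯S_j)^(m-1)`
leaves `S₁⋯S_j · S_{j+1}^m ≤ R₁⋯R_j · R_{j+1}^m`. Then
`R₁⋯R_j · L^m = S₁⋯S_j · S_j^m ≤ S₁⋯S_j · S_{j+1}^m ≤ R₁⋯R_j · R_{j+1}^m`, so `L ≤ R_{j+1}`.
-/

open Finset

theorem Real.rpow_one_div_le_rpow_one_div_iff {a b p q : ℝ} (ha : 0 ≤ a) (hb : 0 ≤ b)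
    (hp : 0 < p) (hq : 0 < q) : a ^ (1 / p) ≤ b ^ (1 / q) ↔ a ^ q ≤ b ^ p := by
  rw [← Real.rpow_le_rpow_iff (by positivity) (by positivity) (mul_pos hp hq),
    ← Real.rpow_mul ha, ← Real.rpow_mul hb, one_div_mul_eq_div, one_div_mul_eq_div,
    mul_div_cancel_left₀ q hp.ne', mul_div_cancel_right₀ p hq.ne']

theorem div_pow_le_mul_div_mul_pow_succ_iff {a b r s : ℝ} (ha : 0 < a) (hb : 0 < b)
    (hs : 0 < s) (n : ℕ) :
    (a / b) ^ n ≤ (a * r / (b * s)) ^ (n + 1) ↔ b * s ^ (n + 1) ≤ a * r ^ (n + 1) := by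
  have split : (a * r / (b * s)) ^ (n + 1) =
      (a / b) ^ n * (a * r ^ (n + 1) / (b * s ^ (n + 1))) := by
    rw [mul_div_mul_comm, mul_pow, pow_succ, mul_assoc, div_pow r, mul_div_mul_comm]
  rw [split, le_mul_iff_one_le_right (by positivity), one_le_div (by positivity)]

theorem area_expanding_stmt5_general (n j k : ℕ) (R S : ℕ → ℝ) (L : ℝ)
    (hR : ∀ i, i ≤ n → 0 < R i) (hS : ∀ i, i ≤ n → 0 < S i)
    (hSm : ∀ i, i < n → S i ≤ S (i + 1))
    (hjk : j < k - 1) (hkn : k ≤ n)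
    (hLdef : (∏ i ∈ Finset.Icc 1 j, R i) * L ^ (k - j) =
      (∏ i ∈ Finset.Icc 1 j, S i) * (S j) ^ (k - j))
    (hmin : ((∏ i ∈ Finset.Icc 1 j, R i) / (∏ i ∈ Finset.Icc 1 j, S i)) ^
        ((1 : ℝ) / ((k : ℝ) - j)) ≤
      ((∏ i ∈ Finset.Icc 1 (j + 1), R i) / (∏ i ∈ Finset.Icc 1 (j + 1), S i)) ^
        ((1 : ℝ) / ((k : ℝ) - j - 1))) :
    (∏ i ∈ Finset.Icc 1 j, S i) * (S (j + 1)) ^ (k - j) ≤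
      (∏ i ∈ Finset.Icc 1 j, R i) * (R (j + 1)) ^ (k - j) ∧
    L ≤ R (j + 1) := by
  obtain ⟨m, hm⟩ : ∃ m, k - j = m + 1 := ⟨k - j - 1, by omega⟩
  have hm₀ : 0 < m := by omega
  have hPR : 0 < ∏ i ∈ Icc 1 j, R i := prod_pos fun i hi => hR i (by grind)
  have hPS : 0 < ∏ i ∈ Icc 1 j, S i := prod_pos fun i hi => hS i (by grind)
  have hr : 0 < R (j + 1) := hR _ (by omega)
  have hs : 0 < S (j + 1) := hS _ (by omega)
  have hexp : (k : ℝ) - j = ((m + 1 : ℕ) : ℝ) := by rw [← hm, Nat.cast_sub (by omega)]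
  have hexp' : (k : ℝ) - j - 1 = m := by rw [hexp]; push_cast; ring
  rw [prod_Icc_succ_top (by omega), prod_Icc_succ_top (by omega), hexp', hexp,
    Real.rpow_one_div_le_rpow_one_div_iff (by positivity) (by positivity)
      (by positivity) (Nat.cast_pos.mpr hm₀), Real.rpow_natCast, Real.rpow_natCast,
    div_pow_le_mul_div_mul_pow_succ_iff hPR hPS hs] at hmin
  rw [hm] at hLdef ⊢
  refine ⟨hmin, le_of_pow_le_pow_left₀ m.succ_ne_zero hr.le
    (le_of_mul_le_mul_left ?_ hPR)⟩
  calc (∏ i ∈ Icc 1 j, R i) * L ^ (m + 1) = (∏ i ∈ Icc 1 j, S i) * S j ^ (m + 1) := hLdef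
    _ ≤ (∏ i ∈ Icc 1 j, S i) * S (j + 1) ^ (m + 1) := by
      gcongr
      exacts [(hS j (by omega)).le, hSm j (by omega)]
    _ ≤ (∏ i ∈ Icc 1 j, R i) * R (j + 1) ^ (m + 1) := hmin

/-- with `R₁ ≤ ... ≤ R_n`, `S₁ ≤ ... ≤ S_n` positive and
`0 ≤ j < k - 1 < k ≤ n`, if
`((R₁⋯R_j)/(S₁⋯S_j))^(1/(k-j)) ≤ ((R₁⋯R_{j+1})/(S₁⋯S_{j+1}))^(1/(k-j-1))`,
then `S₁⋯S_j · S_{j+1}^(k-j) ≤ R₁⋯R_j · R_{j+1}^(k-j)`; consequently if `L > 0`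
satisfies `R₁⋯R_j · L^(k-j) = S₁⋯S_j · S_j^(k-j)` then `L ≤ R_{j+1}`. -/
theorem area_expanding_stmt5 (n j k : ℕ) (R S : ℕ → ℝ) (L : ℝ)
    (hR : ∀ i, i ≤ n → 0 < R i) (hS : ∀ i, i ≤ n → 0 < S i)
    (hRm : ∀ i, i < n → R i ≤ R (i + 1))
    (hSm : ∀ i, i < n → S i ≤ S (i + 1))
    (hjk : j < k - 1) (hk : 1 < k) (hkn : k ≤ n)
    (hL : 0 < L)
    (hLdef : (∏ i ∈ Finset.Icc 1 j, R i) * L ^ (k - j) =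
      (∏ i ∈ Finset.Icc 1 j, S i) * (S j) ^ (k - j))
    (hmin : ((∏ i ∈ Finset.Icc 1 j, R i) / (∏ i ∈ Finset.Icc 1 j, S i)) ^
        ((1 : ℝ) / ((k : ℝ) - j)) ≤
      ((∏ i ∈ Finset.Icc 1 (j + 1), R i) / (∏ i ∈ Finset.Icc 1 (j + 1), S i)) ^
        ((1 : ℝ) / ((k : ℝ) - j - 1))) :
    (∏ i ∈ Finset.Icc 1 j, S i) * (S (j + 1)) ^ (k - j) ≤
      (∏ i ∈ Finset.Icc 1 j, R i) * (R (j + 1)) ^ (k - j) ∧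
    L ≤ R (j + 1) :=
  area_expanding_stmt5_general n j k R S L hR hS hSm hjk hkn hLdef hmin
end

section
/- Let R₁ ≤ ... ≤ R_n and S₁ ≤ ... ≤ S_n be positive reals and 1 ≤ k ≤ n. Suppose for all integers 0 ≤ j < k ≤ l ≤ n: R₁⋯R_j·(R_{j+1}⋯R_l)^((k-j)/(l-j)) ≥ S₁⋯S_j·(S_{j+1}⋯S_l)^((k-j)/(l-j)). Then there exists a k-contracting linear diffeomorphism from the rectangle with sides R_i to a rectangle with sides T₁,...,T_n satisfying T₁⋯T_p ≥ S₁⋯S_p for all 1 ≤ p ≤ n. A diagonal linear map with diagonal entries λ_i = T_i/R_i is k-contracting if and only if the product of the k largest λ_i is at most 1. -/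
/-!
Put `X p = ∑_{i ≤ p} log (S i / R i)` and look for `T i = R i · exp (x i)` with `x` nonincreasing,
so that the `k` largest ratios `T i / R i` are the first `k`. Then `x` has to satisfy
`∑_{i ≤ p} x i ≥ X p` for `p ≤ n` and `∑_{i ≤ k} x i ≤ 0`. Take for `x` the slopes of the least
concave majorant of `X` on `{0, …, n}`, given by the min–max formula
`x i = min_{j < i} max_{i ≤ l ≤ n} (X l - X j) / (l - j)`, which is visibly nonincreasing.
Its partial sums dominate `X`, and at `k` they are bounded by the largest value at `k` of a chord
of the graph of `X` over an interval `[j, l] ∋ k`; in logarithms the hypothesis says exactly that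
these chord values are `≤ 0`.
-/

open Finset

lemma Antitone.sum_le_sum_Ioc_card {M : Type*} [AddCommMonoid M] [PartialOrder M]
    [IsOrderedAddMonoid M] {x : ℕ → M} (hx : Antitone x) {A : Finset ℕ} (hA : 0 ∉ A) :
    ∑ i ∈ A, x i ≤ ∑ i ∈ Ioc 0 #A, x i := by
  induction A using Finset.induction_on_max with
  | empty => simp
  | insert a s hlt ih =>
    have has : a ∉ s := fun h => lt_irrefl a (hlt a h)
    have hcard : #s + 1 ≤ a := by
      have hsub : s ⊆ Ioo 0 a := fun b hb =>
        mem_Ioo.mpr ⟨Nat.pos_of_ne_zero fun h => hA (h ▸ mem_insert_of_mem hb), hlt b hb⟩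
      have := card_le_card hsub
      rw [Nat.card_Ioo] at this
      have : a ≠ 0 := fun h => hA (h ▸ mem_insert_self a s)
      omega
    rw [sum_insert has, card_insert_of_notMem has, sum_Ioc_succ_top (Nat.zero_le _), add_comm]
    exact add_le_add (ih fun h => hA (mem_insert_of_mem h)) (hx hcard)

lemma Real.log_prod_mul_prod_rpow {ι : Type*} {s t : Finset ι} {f : ι → ℝ}
    (hs : ∀ i ∈ s, 0 < f i) (ht : ∀ i ∈ t, 0 < f i) (c : ℝ) :
    Real.log ((∏ i ∈ s, f i) * (∏ i ∈ t, f i) ^ c) =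
      ∑ i ∈ s, Real.log (f i) + c * ∑ i ∈ t, Real.log (f i) := by
  rw [Real.log_mul (prod_pos hs).ne' (Real.rpow_pos_of_pos (prod_pos ht) c).ne',
    Real.log_rpow (prod_pos ht), Real.log_prod fun i hi => (hs i hi).ne',
    Real.log_prod fun i hi => (ht i hi).ne']

lemma Real.prod_eq_prod_mul_exp_sum_log_sub {ι : Type*} {s : Finset ι} {R S : ι → ℝ}
    (hR : ∀ i ∈ s, 0 < R i) (hS : ∀ i ∈ s, 0 < S i) :
    ∏ i ∈ s, S i = (∏ i ∈ s, R i) * Real.exp (∑ i ∈ s, (Real.log (S i) - Real.log (R i))) := by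
  rw [Real.exp_sum, ← prod_mul_distrib]
  refine prod_congr rfl fun i hi => ?_
  rw [Real.exp_sub, Real.exp_log (hS i hi), Real.exp_log (hR i hi)]
  field_simp [(hR i hi).ne']

namespace ConcaveMajorant

variable (X : ℕ → ℝ) (n : ℕ)

noncomputable def chordSlope (j l : ℕ) : ℝ := (X l - X j) / ((l : ℝ) - j)

noncomputable def chord (j l p : ℕ) : ℝ := X j + ((p : ℝ) - j) * chordSlope X j l

-- `min · n` and `i - 1` only keep the index sets nonempty: for `p ≤ n` and `1 ≤ i ≤ n`, `chordSup`
-- ranges over `j ≤ p ≤ l ≤ n` and `minMaxSlope` over `j < i ≤ l ≤ n`. The degenerate chord `j = l`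
-- has slope `0 / 0 = 0`, so it is the constant `X j`.
noncomputable def chordSup (p : ℕ) : ℝ :=
  (Iic p ×ˢ Icc (min p n) n).sup' ⟨(0, n), by simp⟩ fun q => chord X q.1 q.2 p

noncomputable def maxSlopeFrom (j i : ℕ) : ℝ :=
  (Icc (min i n) n).sup' ⟨n, by simp⟩ (chordSlope X j)

noncomputable def minMaxSlope (i : ℕ) : ℝ :=
  (Iic (i - 1)).inf' ⟨0, by simp⟩ fun j => maxSlopeFrom X n j i

@[simp]
lemma chord_left (j l : ℕ) : chord X j l j = X j := by
  simp [chord]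

lemma chord_right (j l : ℕ) : chord X j l l = X l := by
  rcases eq_or_ne j l with rfl | hjl
  · exact chord_left X j j
  · have hlj : (l : ℝ) - j ≠ 0 := sub_ne_zero.mpr (by exact_mod_cast hjl.symm)
    simp only [chord, chordSlope]
    field_simp
    ring

lemma chord_succ (j l p : ℕ) : chord X j l (p + 1) = chord X j l p + chordSlope X j l := by
  simp only [chord]
  push_cast
  ring

variable {X n}

lemma chord_le_chordSup {j l p : ℕ} (hjp : j ≤ p) (hpl : p ≤ l) (hln : l ≤ n) :
    chord X j l p ≤ chordSup X n p :=
  le_sup' (fun q : ℕ × ℕ => chord X q.1 q.2 p) (b := (j, l)) <|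
    mem_product.mpr ⟨mem_Iic.mpr hjp, mem_Icc.mpr ⟨min_le_of_left_le hpl, hln⟩⟩

lemma exists_chordSup_eq {p : ℕ} (hpn : p ≤ n) :
    ∃ j l, j ≤ p ∧ p ≤ l ∧ l ≤ n ∧ chordSup X n p = chord X j l p := by
  obtain ⟨⟨j, l⟩, hq, h⟩ := exists_mem_eq_sup' (s := Iic p ×ˢ Icc (min p n) n) ⟨(0, n), by simp⟩
    fun q => chord X q.1 q.2 p
  simp only [mem_product, mem_Iic, mem_Icc, min_eq_left hpn] at hq
  exact ⟨j, l, hq.1, hq.2.1, hq.2.2, h⟩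

lemma chordSup_nonpos {k : ℕ} (hX0 : X 0 = 0) (hkn : k ≤ n)
    (h : ∀ j l, j < k → k ≤ l → l ≤ n → chord X j l k ≤ 0) : chordSup X n k ≤ 0 := by
  have hXk : X k ≤ 0 := by
    rcases Nat.eq_zero_or_pos k with rfl | hk
    · exact hX0.le
    · simpa only [chord_right] using h 0 k hk le_rfl hkn
  refine sup'_le _ _ fun ⟨j, l⟩ hq => ?_
  simp only [mem_product, mem_Iic, mem_Icc, min_eq_left hkn] at hq
  obtain ⟨hjk, hkl, hln⟩ := hq
  rcases hjk.lt_or_eq with hjk | rfl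
  · exact h j l hjk hkl hln
  · simpa using hXk

lemma maxSlopeFrom_antitone (j : ℕ) : Antitone (maxSlopeFrom X n j) := fun _ _ hab =>
  sup'_mono _ (Icc_subset_Icc (min_le_min_right n hab) le_rfl) _

lemma chordSlope_le_maxSlopeFrom {i j l : ℕ} (hil : i ≤ l) (hln : l ≤ n) :
    chordSlope X j l ≤ maxSlopeFrom X n j i :=
  le_sup' _ (mem_Icc.mpr ⟨min_le_of_left_le hil, hln⟩)

lemma exists_maxSlopeFrom_eq {i : ℕ} (j : ℕ) (hin : i ≤ n) :
    ∃ l, i ≤ l ∧ l ≤ n ∧ maxSlopeFrom X n j i = chordSlope X j l := by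
  obtain ⟨l, hl, h⟩ := exists_mem_eq_sup' (s := Icc (min i n) n) ⟨n, by simp⟩ (chordSlope X j)
  rw [min_eq_left hin, mem_Icc] at hl
  exact ⟨l, hl.1, hl.2, h⟩

lemma minMaxSlope_le_maxSlopeFrom {i j : ℕ} (hji : j < i) :
    minMaxSlope X n i ≤ maxSlopeFrom X n j i :=
  inf'_le _ (mem_Iic.mpr (by omega))

lemma exists_minMaxSlope_eq {i : ℕ} (hi : 0 < i) :
    ∃ j < i, minMaxSlope X n i = maxSlopeFrom X n j i := by
  obtain ⟨j, hj, h⟩ := exists_mem_eq_inf' (s := Iic (i - 1)) ⟨0, by simp⟩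
    fun j => maxSlopeFrom X n j i
  exact ⟨j, by rw [mem_Iic] at hj; omega, h⟩

lemma minMaxSlope_antitone : Antitone (minMaxSlope X n) := fun _ _ hab =>
  le_inf' _ _ fun j hj =>
    (inf'_le _ (mem_Iic.mpr ((mem_Iic.mp hj).trans (Nat.sub_le_sub_right hab 1)))).trans
      (maxSlopeFrom_antitone j hab)

lemma le_sum_minMaxSlope (hX0 : X 0 = 0) {p : ℕ} (hpn : p ≤ n) :
    X p ≤ ∑ i ∈ Ioc 0 p, minMaxSlope X n i := by
  induction p using Nat.strong_induction_on with
  | _ p ih =>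
  rcases Nat.eq_zero_or_pos p with rfl | hp
  · simp [hX0]
  obtain ⟨j, hjp, hj⟩ := exists_minMaxSlope_eq (X := X) (n := n) hp
  have hslope : chordSlope X j p ≤ minMaxSlope X n p :=
    hj ▸ chordSlope_le_maxSlopeFrom le_rfl hpn
  have hblock : ((p : ℝ) - j) * minMaxSlope X n p ≤ ∑ i ∈ Ioc j p, minMaxSlope X n i := by
    have := card_nsmul_le_sum (Ioc j p) (minMaxSlope X n) (minMaxSlope X n p)
      fun i hi => minMaxSlope_antitone (mem_Ioc.mp hi).2
    rwa [Nat.card_Ioc, nsmul_eq_mul, Nat.cast_sub hjp.le] at this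
  have hpj : (0 : ℝ) ≤ p - j := sub_nonneg.mpr (by exact_mod_cast hjp.le)
  calc X p = X j + ((p : ℝ) - j) * chordSlope X j p := (chord_right X j p).symm
    _ ≤ ∑ i ∈ Ioc 0 j, minMaxSlope X n i + ∑ i ∈ Ioc j p, minMaxSlope X n i :=
      add_le_add (ih j hjp (by omega)) ((mul_le_mul_of_nonneg_left hslope hpj).trans hblock)
    _ = ∑ i ∈ Ioc 0 p, minMaxSlope X n i := sum_Ioc_consecutive _ (Nat.zero_le j) hjp.le

lemma exists_supporting_chord {p : ℕ} (hpn : p + 1 ≤ n) :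
    ∃ j l, j ≤ p ∧ p + 1 ≤ l ∧ l ≤ n ∧ chord X j l p = chordSup X n p ∧
      minMaxSlope X n (p + 1) ≤ chordSlope X j l := by
  obtain ⟨j₁, l₁, hj₁, hl₁, hl₁n, hsup⟩ := exists_chordSup_eq (X := X) (by omega : p ≤ n)
  by_cases hinner : j₁ < p ∧ p < l₁
  · obtain ⟨l, hl, hln, hmax⟩ := exists_maxSlopeFrom_eq (X := X) j₁ hpn
    have hopt : ((p : ℝ) - j₁) * chordSlope X j₁ l ≤ ((p : ℝ) - j₁) * chordSlope X j₁ l₁ := by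
      have := hsup ▸ chord_le_chordSup (X := X) hj₁ (by omega : p ≤ l) hln
      simpa only [chord, add_le_add_iff_left] using this
    have hpj : (0 : ℝ) < p - j₁ := sub_pos.mpr (by exact_mod_cast hinner.1)
    refine ⟨j₁, l₁, hj₁, hinner.2, hl₁n, hsup.symm, ?_⟩
    calc minMaxSlope X n (p + 1) ≤ maxSlopeFrom X n j₁ (p + 1) :=
          minMaxSlope_le_maxSlopeFrom (by omega)
      _ = chordSlope X j₁ l := hmax
      _ ≤ chordSlope X j₁ l₁ := le_of_mul_le_mul_left hopt hpj
  · -- the optimal chord at `p` degenerates to the point `(p, X p)`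
    have hXp : chordSup X n p = X p := by
      rcases not_and_or.mp hinner with h | h
      · rw [hsup, show j₁ = p by omega, chord_left]
      · rw [hsup, show p = l₁ by omega, chord_right]
    obtain ⟨l, hl, hln, hmax⟩ := exists_maxSlopeFrom_eq (X := X) p hpn
    exact ⟨p, l, le_rfl, hl, hln, by rw [chord_left, hXp],
      hmax ▸ minMaxSlope_le_maxSlopeFrom (by omega)⟩

lemma chordSup_add_minMaxSlope_le {p : ℕ} (hpn : p + 1 ≤ n) :
    chordSup X n p + minMaxSlope X n (p + 1) ≤ chordSup X n (p + 1) := by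
  obtain ⟨j, l, hjp, hpl, hln, hchord, hslope⟩ := exists_supporting_chord (X := X) hpn
  calc chordSup X n p + minMaxSlope X n (p + 1) ≤ chord X j l p + chordSlope X j l := by
        rw [hchord]; gcongr
    _ = chord X j l (p + 1) := (chord_succ X j l p).symm
    _ ≤ chordSup X n (p + 1) := chord_le_chordSup (by omega) hpl hln

lemma sum_minMaxSlope_le_chordSup (hX0 : X 0 = 0) {p : ℕ} (hpn : p ≤ n) :
    ∑ i ∈ Ioc 0 p, minMaxSlope X n i ≤ chordSup X n p := by
  induction p with
  | zero => simpa [hX0] using chord_le_chordSup (X := X) le_rfl (Nat.zero_le n) le_rfl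
  | succ p ih =>
    rw [sum_Ioc_succ_top (Nat.zero_le p)]
    linarith [ih (by omega), chordSup_add_minMaxSlope_le (X := X) hpn]

end ConcaveMajorant

lemma chord_sum_log_sub_nonpos {R S : ℕ → ℝ} {j k l : ℕ} (hjl : j ≤ l)
    (hR : ∀ i ∈ Ioc 0 l, 0 < R i) (hS : ∀ i ∈ Ioc 0 l, 0 < S i)
    (h : (∏ i ∈ Ioc 0 j, S i) * (∏ i ∈ Ioc j l, S i) ^ (((k : ℝ) - j) / ((l : ℝ) - j)) ≤
      (∏ i ∈ Ioc 0 j, R i) * (∏ i ∈ Ioc j l, R i) ^ (((k : ℝ) - j) / ((l : ℝ) - j))) :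
    ConcaveMajorant.chord (fun p => ∑ i ∈ Ioc 0 p, (Real.log (S i) - Real.log (R i))) j l k
      ≤ 0 := by
  have hleft : Ioc 0 j ⊆ Ioc 0 l := Ioc_subset_Ioc_right hjl
  have hright : Ioc j l ⊆ Ioc 0 l := Ioc_subset_Ioc_left (Nat.zero_le j)
  have hlog := Real.log_le_log (mul_pos (prod_pos fun i hi => hS i (hleft hi))
    (Real.rpow_pos_of_pos (prod_pos fun i hi => hS i (hright hi)) _)) h
  rw [Real.log_prod_mul_prod_rpow (fun i hi => hS i (hleft hi)) (fun i hi => hS i (hright hi)),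
    Real.log_prod_mul_prod_rpow (fun i hi => hR i (hleft hi)) (fun i hi => hR i (hright hi))]
    at hlog
  rw [ConcaveMajorant.chord, ConcaveMajorant.chordSlope,
    ← sum_Ioc_consecutive _ (Nat.zero_le j) hjl, add_sub_cancel_left]
  simp only [sum_sub_distrib]
  have hc : ((k : ℝ) - j) * ((∑ i ∈ Ioc j l, Real.log (S i) - ∑ i ∈ Ioc j l, Real.log (R i)) /
      ((l : ℝ) - j)) = ((k : ℝ) - j) / ((l : ℝ) - j) *
        (∑ i ∈ Ioc j l, Real.log (S i) - ∑ i ∈ Ioc j l, Real.log (R i)) := by ring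
  linarith

open ConcaveMajorant in
theorem area_expanding_stmt12_general (n k : ℕ) (R S : ℕ → ℝ)
    (hR : ∀ i, 1 ≤ i → i ≤ n → 0 < R i) (hS : ∀ i, 1 ≤ i → i ≤ n → 0 < S i)
    (hIn : ∀ j l : ℕ, j < k → k ≤ l → l ≤ n →
      (∏ i ∈ Finset.Icc 1 j, S i) *
          (∏ i ∈ Finset.Icc (j + 1) l, S i) ^ (((k : ℝ) - j) / ((l : ℝ) - j)) ≤
        (∏ i ∈ Finset.Icc 1 j, R i) *
          (∏ i ∈ Finset.Icc (j + 1) l, R i) ^ (((k : ℝ) - j) / ((l : ℝ) - j))) :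
    ∃ T : ℕ → ℝ, (∀ i, 1 ≤ i → i ≤ n → 0 < T i) ∧
      (∀ p, 1 ≤ p → p ≤ n →
        (∏ i ∈ Finset.Icc 1 p, S i) ≤ ∏ i ∈ Finset.Icc 1 p, T i) ∧
      (∀ A : Finset ℕ, A ⊆ Finset.Icc 1 n → A.card = k →
        ∏ i ∈ A, (T i / R i) ≤ 1) := by
  have hR' : ∀ {m}, m ≤ n → ∀ i ∈ Ioc 0 m, 0 < R i := fun hm i hi =>
    hR i (mem_Ioc.mp hi).1 ((mem_Ioc.mp hi).2.trans hm)
  have hS' : ∀ {m}, m ≤ n → ∀ i ∈ Ioc 0 m, 0 < S i := fun hm i hi =>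
    hS i (mem_Ioc.mp hi).1 ((mem_Ioc.mp hi).2.trans hm)
  have hIcc : ∀ m, Icc 1 m = Ioc 0 m := fun _ => rfl
  set X : ℕ → ℝ := fun p => ∑ i ∈ Ioc 0 p, (Real.log (S i) - Real.log (R i))
  have hX0 : X 0 = 0 := by simp [X]
  refine ⟨fun i => R i * Real.exp (minMaxSlope X n i),
    fun i hi hin => mul_pos (hR i hi hin) (Real.exp_pos _), fun p _ hpn => ?_, fun A hA hcard => ?_⟩
  · rw [hIcc, Real.prod_eq_prod_mul_exp_sum_log_sub (hR' hpn) (hS' hpn), prod_mul_distrib,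
      ← Real.exp_sum]
    exact mul_le_mul_of_nonneg_left (Real.exp_le_exp.mpr (le_sum_minMaxSlope hX0 hpn))
      (prod_pos (hR' hpn)).le
  · have hkn : k ≤ n := hcard ▸ (card_le_card hA).trans (by simp)
    have hchord : ∀ j l, j < k → k ≤ l → l ≤ n → chord X j l k ≤ 0 := fun j l hjk hkl hln =>
      chord_sum_log_sub_nonpos (by omega) (hR' hln) (hS' hln) <| by
        simpa only [hIcc, Icc_add_one_left_eq_Ioc] using hIn j l hjk hkl hln
    have h0A : 0 ∉ A := fun h => by simpa using hA h
    calc ∏ i ∈ A, R i * Real.exp (minMaxSlope X n i) / R i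
        = Real.exp (∑ i ∈ A, minMaxSlope X n i) := by
          rw [Real.exp_sum]
          exact prod_congr rfl fun i hi => mul_div_cancel_left₀ _
            (hR i (mem_Icc.mp (hA hi)).1 (mem_Icc.mp (hA hi)).2).ne'
      _ ≤ Real.exp 0 := by
          gcongr
          calc ∑ i ∈ A, minMaxSlope X n i ≤ ∑ i ∈ Ioc 0 k, minMaxSlope X n i :=
                hcard ▸ minMaxSlope_antitone.sum_le_sum_Ioc_card h0A
            _ ≤ chordSup X n k := sum_minMaxSlope_le_chordSup hX0 hkn
            _ ≤ 0 := chordSup_nonpos hX0 hkn hchord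
      _ = 1 := Real.exp_zero

/-- Lemma 7.2: if for all `0 ≤ j < k ≤ l ≤ n`
`R₁⋯R_j·(R_{j+1}⋯R_l)^((k-j)/(l-j)) ≥ S₁⋯S_j·(S_{j+1}⋯S_l)^((k-j)/(l-j))`,
then there is a `k`-contracting linear diffeomorphism from the rectangle `R` to
a rectangle `T` with `T₁⋯T_p ≥ S₁⋯S_p` for all `p`.  The diagonal linear map
with entries `λᵢ = Tᵢ/Rᵢ` is `k`-contracting iff the product of the `k`
largest `λᵢ` is at most `1`, i.e. every `k`-element product is at most `1`. -/
theorem area_expanding_stmt12 (n k : ℕ) (R S : ℕ → ℝ)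
    (hR : ∀ i, 1 ≤ i → i ≤ n → 0 < R i) (hS : ∀ i, 1 ≤ i → i ≤ n → 0 < S i)
    (hRm : ∀ i, 1 ≤ i → i < n → R i ≤ R (i + 1))
    (hSm : ∀ i, 1 ≤ i → i < n → S i ≤ S (i + 1))
    (hk : 1 ≤ k) (hkn : k ≤ n)
    (hIn : ∀ j l : ℕ, j < k → k ≤ l → l ≤ n →
      (∏ i ∈ Finset.Icc 1 j, S i) *
          (∏ i ∈ Finset.Icc (j + 1) l, S i) ^ (((k : ℝ) - j) / ((l : ℝ) - j)) ≤
        (∏ i ∈ Finset.Icc 1 j, R i) *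
          (∏ i ∈ Finset.Icc (j + 1) l, R i) ^ (((k : ℝ) - j) / ((l : ℝ) - j))) :
    ∃ T : ℕ → ℝ, (∀ i, 1 ≤ i → i ≤ n → 0 < T i) ∧
      (∀ p, 1 ≤ p → p ≤ n →
        (∏ i ∈ Finset.Icc 1 p, S i) ≤ ∏ i ∈ Finset.Icc 1 p, T i) ∧
      (∀ A : Finset ℕ, A ⊆ Finset.Icc 1 n → A.card = k →
        ∏ i ∈ A, (T i / R i) ≤ 1) :=
  area_expanding_stmt12_general n k R S hR hS hIn
end
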